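/- Let f be a Schwartz function on ℝⁿ and let f̂(ξ) = ∫ e^{−2πi x·ξ} f(x) dx be its Fourier transform. Let l ∈ ℕ, ε ∈ [0, 1], β = l + ε, and fix a coordinate index i ∈ {1, …, n}. Then (2π)^β·‖|x_i|^β f‖_{L²(ℝⁿ)} ≤ ‖∂_i^l f̂‖_{L²(ℝⁿ)}^{1−ε}·‖∂_i^{l+1} f̂‖_{L²(ℝⁿ)}^{ε}, where |x_i|^β f denotes the function x ↦ |x_i|^β f(x) and ∂_i denotes the partial derivative with respect to the i-th coordinate. -/

import Mathlib

/-!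
By Plancherel, `‖∂_i^k f̂‖₂ = ‖(2π|x_i|)^k f‖₂`, since differentiating `f̂` in the direction `e_i`
is the Fourier transform of multiplication by `-2πi x_i`. The inequality is then the
log-convexity of the moments `s ↦ ∫ (2π|x_i|)^{2s} |f|²`, which is Hölder's inequality with
exponents `1/(1-ε)` and `1/ε` applied to `(2π|x_i|)^{2(l+ε)} |f|² = ((2π|x_i|)^{2l} |f|²)^{1-ε}
((2π|x_i|)^{2(l+1)} |f|²)^ε`.
-/

noncomputable section

open MeasureTheory

/-- The Fourier transform `f̂(ξ) = ∫ e^{−2πi x·ξ} f(x) dx`. -/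
def fhat {n : ℕ} (f : EuclideanSpace ℝ (Fin n) → ℂ) (ξ : EuclideanSpace ℝ (Fin n)) : ℂ :=
  ∫ x : EuclideanSpace ℝ (Fin n),
    Complex.exp (-(2 * Real.pi * Complex.I * ((inner ℝ x ξ : ℝ) : ℂ))) * f x

/-- The `l`-fold partial derivative `∂_i^l`. -/
def iterD {n : ℕ} (i : Fin n) (l : ℕ) (g : EuclideanSpace ℝ (Fin n) → ℂ) :
    EuclideanSpace ℝ (Fin n) → ℂ :=
  (fun h (x : EuclideanSpace ℝ (Fin n)) => fderiv ℝ h x (EuclideanSpace.single i 1))^[l] g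

open Real SchwartzMap LineDeriv
open scoped FourierTransform

section Moments

variable {α : Type*} [MeasurableSpace α] {μ : Measure α}

theorem integral_rpow_mul_rpow_le {F G : α → ℝ} (hF0 : 0 ≤ F) (hG0 : 0 ≤ G)
    (hF : Integrable F μ) (hG : Integrable G μ) {p q : ℝ} (hp : 0 ≤ p) (hq : 0 ≤ q)
    (hpq : p + q = 1) :
    ∫ a, F a ^ p * G a ^ q ∂μ ≤ (∫ a, F a ∂μ) ^ p * (∫ a, G a ∂μ) ^ q := by
  have hofReal : ∀ a, ENNReal.ofReal (F a ^ p * G a ^ q)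
      = ENNReal.ofReal (F a) ^ p * ENNReal.ofReal (G a) ^ q := fun a => by
    rw [ENNReal.ofReal_mul (rpow_nonneg (hF0 a) p), ENNReal.ofReal_rpow_of_nonneg (hF0 a) hp,
      ENNReal.ofReal_rpow_of_nonneg (hG0 a) hq]
  have hmeas : AEStronglyMeasurable (fun a => F a ^ p * G a ^ q) μ :=
    (hF.1.aemeasurable.pow_const p |>.mul (hG.1.aemeasurable.pow_const q)).aestronglyMeasurable
  rw [integral_eq_lintegral_of_nonneg_ae
      (.of_forall fun a => mul_nonneg (rpow_nonneg (hF0 a) p) (rpow_nonneg (hG0 a) q)) hmeas,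
    integral_eq_lintegral_of_nonneg_ae (.of_forall hF0) hF.1,
    integral_eq_lintegral_of_nonneg_ae (.of_forall hG0) hG.1, ENNReal.toReal_rpow,
    ENNReal.toReal_rpow, ← ENNReal.toReal_mul]
  simp_rw [hofReal]
  exact ENNReal.toReal_mono (ENNReal.mul_ne_top
    (ENNReal.rpow_ne_top_of_nonneg hp hF.lintegral_lt_top.ne)
    (ENNReal.rpow_ne_top_of_nonneg hq hG.lintegral_lt_top.ne))
    (ENNReal.lintegral_mul_norm_pow_le hF.1.aemeasurable.ennreal_ofReal
      hG.1.aemeasurable.ennreal_ofReal hp hq hpq)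

theorem sq_rpow_add_mul_eq {a ε : ℝ} (b : ℝ) (ha : 0 ≤ a) (l : ℕ) (hε0 : 0 ≤ ε) (hε1 : ε ≤ 1) :
    (a ^ ((l : ℝ) + ε) * b) ^ 2 = ((a ^ l * b) ^ 2) ^ (1 - ε) * ((a ^ (l + 1) * b) ^ 2) ^ ε := by
  have hsplit : (a ^ (l + 1) * b) ^ 2 = (a ^ l * b) ^ 2 * a ^ 2 := by ring
  rw [hsplit, mul_rpow (sq_nonneg _) (sq_nonneg _), ← mul_assoc,
    ← rpow_add_of_nonneg (sq_nonneg _) (by linarith) hε0, sub_add_cancel, rpow_one,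
    rpow_add_of_nonneg ha (Nat.cast_nonneg l) hε0, rpow_natCast,
    ← rpow_natCast a 2, ← rpow_mul ha, mul_comm (2 : ℕ).cast ε, rpow_mul ha, rpow_natCast]
  ring

theorem integral_sq_rpow_add_mul_le (w u : α → ℝ) (hw : 0 ≤ w) (l : ℕ)
    (hl : Integrable (fun a => (w a ^ l * u a) ^ 2) μ)
    (hl' : Integrable (fun a => (w a ^ (l + 1) * u a) ^ 2) μ) {ε : ℝ} (hε0 : 0 ≤ ε)
    (hε1 : ε ≤ 1) :
    ∫ a, (w a ^ ((l : ℝ) + ε) * u a) ^ 2 ∂μ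
      ≤ (∫ a, (w a ^ l * u a) ^ 2 ∂μ) ^ (1 - ε) * (∫ a, (w a ^ (l + 1) * u a) ^ 2 ∂μ) ^ ε := by
  simp_rw [sq_rpow_add_mul_eq _ (hw _) l hε0 hε1]
  exact integral_rpow_mul_rpow_le (fun a => sq_nonneg _) (fun a => sq_nonneg _) hl hl'
    (by linarith) hε0 (by ring)

theorem mul_integral_sq_rpow_half_eq {c : ℝ} (hc : 0 ≤ c) (g : α → ℝ) :
    c * (∫ a, g a ^ 2 ∂μ) ^ ((1 : ℝ) / 2) = (∫ a, (c * g a) ^ 2 ∂μ) ^ ((1 : ℝ) / 2) := by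
  simp_rw [mul_pow, integral_const_mul, ← sqrt_eq_rpow,
    sqrt_mul' _ (integral_nonneg fun a => sq_nonneg (g a)), sqrt_sq hc]

end Moments

theorem Real.rpow_mul_rpow_rpow_comm {A B : ℝ} (hA : 0 ≤ A) (hB : 0 ≤ B) (p q r : ℝ) :
    (A ^ p * B ^ q) ^ r = (A ^ r) ^ p * (B ^ r) ^ q := by
  rw [mul_rpow (rpow_nonneg hA p) (rpow_nonneg hB q), ← rpow_mul hA, ← rpow_mul hA,
    ← rpow_mul hB, ← rpow_mul hB, mul_comm p, mul_comm q]

namespace SchwartzMap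

variable {V E : Type*} [NormedAddCommGroup V] [InnerProductSpace ℝ V]
  [NormedAddCommGroup E] [NormedSpace ℂ E]

/-- Multiplication by `-2πi ⟪x, m⟫`, which the Fourier transform turns into `∂_{m}`. -/
def smulNegTwoPiIInner (m : V) (g : 𝓢(V, E)) : 𝓢(V, E) :=
  -(2 * π * Complex.I) • smulLeftCLM E (inner ℝ · m) g

theorem norm_iterate_smulNegTwoPiIInner_apply (f : 𝓢(V, E)) (m : V) (k : ℕ) (x : V) :
    ‖(smulNegTwoPiIInner m)^[k] f x‖ = (2 * π * |inner ℝ x m|) ^ k * ‖f x‖ := by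
  have hm : (inner ℝ · m).HasTemperateGrowth := ((innerSL ℝ).flip m).hasTemperateGrowth
  induction k with
  | zero => simp
  | succ k ih =>
    rw [Function.iterate_succ_apply', smulNegTwoPiIInner, smul_apply, smulLeftCLM_apply_apply hm,
      norm_smul, norm_smul, ih]
    simp only [norm_neg, Complex.norm_mul, Complex.norm_ofNat, Complex.norm_real, norm_eq_abs,
      abs_of_pos pi_pos, Complex.norm_I, mul_one]
    ring

variable [FiniteDimensional ℝ V] [MeasurableSpace V] [BorelSpace V]

theorem lineDerivOp_iterate_fourier_eq_fourier_iterate (f : 𝓢(V, E)) (m : V) (k : ℕ) :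
    (∂_{m})^[k] (𝓕 f) = 𝓕 ((smulNegTwoPiIInner m)^[k] f) := by
  induction k with
  | zero => rfl
  | succ k ih =>
    rw [Function.iterate_succ_apply', ih, lineDerivOp_fourier_eq, Function.iterate_succ_apply',
      smulNegTwoPiIInner]

end SchwartzMap

section EuclideanSpace

variable {n : ℕ}

theorem fhat_eq_fourier (f : EuclideanSpace ℝ (Fin n) → ℂ) : fhat f = 𝓕 f := by
  ext ξ
  rw [fhat, Real.fourier_eq']
  congr 1 with v
  rw [smul_eq_mul]
  push_cast
  ring_nf

theorem iterD_eq_lineDerivOp_iterate (i : Fin n) (k : ℕ) (g : 𝓢(EuclideanSpace ℝ (Fin n), ℂ)) :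
    iterD i k g = (∂_{EuclideanSpace.single i (1 : ℝ)})^[k] g := by
  induction k with
  | zero => rfl
  | succ k ih =>
    rw [iterD, Function.iterate_succ_apply', ← iterD, ih, Function.iterate_succ_apply']
    ext x
    exact (lineDerivOp_apply_eq_fderiv _ _ x).symm

theorem norm_iterate_smulNegTwoPiIInner_single_apply (i : Fin n) (k : ℕ)
    (f : 𝓢(EuclideanSpace ℝ (Fin n), ℂ)) (x : EuclideanSpace ℝ (Fin n)) :
    ‖(smulNegTwoPiIInner (EuclideanSpace.single i (1 : ℝ)))^[k] f x‖
      = (2 * π * |x i|) ^ k * ‖f x‖ := by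
  rw [norm_iterate_smulNegTwoPiIInner_apply, EuclideanSpace.inner_single_right, ringHom_apply,
    one_mul]

theorem integrable_sq_mul_pow_abs_apply (i : Fin n) (k : ℕ)
    (f : 𝓢(EuclideanSpace ℝ (Fin n), ℂ)) :
    Integrable fun x : EuclideanSpace ℝ (Fin n) => ((2 * π * |x i|) ^ k * ‖f x‖) ^ 2 := by
  have hL2 := ((smulNegTwoPiIInner (EuclideanSpace.single i (1 : ℝ)))^[k] f).memLp (2 : ℕ)
  simpa only [norm_iterate_smulNegTwoPiIInner_single_apply] using
    hL2.integrable_norm_pow two_ne_zero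

theorem integral_norm_sq_iterD_fhat (i : Fin n) (k : ℕ) (f : 𝓢(EuclideanSpace ℝ (Fin n), ℂ)) :
    ∫ ξ, ‖iterD i k (fhat f) ξ‖ ^ 2 = ∫ x, ((2 * π * |x i|) ^ k * ‖f x‖) ^ 2 := by
  rw [fhat_eq_fourier, ← fourier_coe, iterD_eq_lineDerivOp_iterate,
    lineDerivOp_iterate_fourier_eq_fourier_iterate, integral_norm_sq_fourier]
  simp_rw [norm_iterate_smulNegTwoPiIInner_single_apply]

end EuclideanSpace

/-- For a Schwartz function `f` on `ℝⁿ`, `β = l + ε` with `ε ∈ [0,1]`: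
`(2π)^β ‖|x_i|^β f‖₂ ≤ ‖∂_i^l f̂‖₂^{1−ε} ‖∂_i^{l+1} f̂‖₂^ε`. -/
theorem stmt15 {n : ℕ} (f : SchwartzMap (EuclideanSpace ℝ (Fin n)) ℂ)
    (l : ℕ) (ε : ℝ) (hε : ε ∈ Set.Icc (0 : ℝ) 1) (β : ℝ) (hβ : β = l + ε) (i : Fin n) :
    (2 * Real.pi) ^ β *
        (∫ x : EuclideanSpace ℝ (Fin n), (|x i| ^ β * ‖f x‖) ^ 2) ^ ((1 : ℝ) / 2)
      ≤ ((∫ ξ : EuclideanSpace ℝ (Fin n), ‖iterD i l (fhat (⇑f)) ξ‖ ^ 2) ^ ((1 : ℝ) / 2))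
            ^ (1 - ε) *
        ((∫ ξ : EuclideanSpace ℝ (Fin n), ‖iterD i (l + 1) (fhat (⇑f)) ξ‖ ^ 2) ^ ((1 : ℝ) / 2))
            ^ ε := by
  obtain ⟨hε0, hε1⟩ := hε
  have hweight : ∀ x : EuclideanSpace ℝ (Fin n), (2 * π) ^ β * (|x i| ^ β * ‖f x‖)
      = (2 * π * |x i|) ^ ((l : ℝ) + ε) * ‖f x‖ := fun x => by
    rw [hβ, mul_rpow (by positivity) (abs_nonneg _), mul_assoc]
  have hmoments := integral_sq_rpow_add_mul_le
    (fun x : EuclideanSpace ℝ (Fin n) => 2 * π * |x i|) (fun x => ‖f x‖)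
    (fun x => by positivity) l (integrable_sq_mul_pow_abs_apply i l f)
    (integrable_sq_mul_pow_abs_apply i (l + 1) f) hε0 hε1
  rw [mul_integral_sq_rpow_half_eq (by positivity), integral_norm_sq_iterD_fhat,
    integral_norm_sq_iterD_fhat, ← rpow_mul_rpow_rpow_comm
      (integral_nonneg fun x => by positivity) (integral_nonneg fun x => by positivity)]
  simp_rw [hweight]
  exact rpow_le_rpow (integral_nonneg fun x => by positivity) hmoments (by norm_num)
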